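/- If an operator concave free function F on a matrix convex domain satisfies 0 ∈ D(ℂ) and F(0) ≥ 0, then the Jensen inequality F((I_A ⊗ W*)X(I_A ⊗ W)) ≥ W*F(X)W holds for all contractions W : E → K (not just isometries) and all X ∈ D(K) with (I_A ⊗ W*)X(I_A ⊗ W) ∈ D(E). -/

import Mathlib

open Matrix
open scoped ComplexOrder

abbrev Mat (d : ℕ) := Matrix (Fin d) (Fin d) ℂ

/-- Loewner order: `A ≤ B` iff `B - A` is positive semi-definite. -/
def Loewner {d : ℕ} (A B : Mat d) : Prop := (B - A).PosSemidef

/-- Direct sum of square matrices, realized on `Fin (d + d')`. -/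
def dsumM {d d' : ℕ} (X : Mat d) (Y : Mat d') : Mat (d + d') :=
  Matrix.reindex finSumFinEquiv finSumFinEquiv (Matrix.fromBlocks X 0 0 Y)

/-- A graded family of sets of `k`-tuples of matrices (the case `𝒜 = ℂᵏ`,
finite-dimensional `E`) is a self-adjoint matrix convex set: closed under
unitary conjugation, direct sums, isometric conjugation and the adjoint. -/
structure IsSAMatrixConvex (k : ℕ) (D : ∀ d : ℕ, Set (Fin k → Mat d)) : Prop where
  unitary : ∀ (d : ℕ) (U : Mat d), U ∈ Matrix.unitaryGroup (Fin d) ℂ →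
    ∀ X ∈ D d, (fun i => Uᴴ * X i * U) ∈ D d
  dsum : ∀ (d d' : ℕ), ∀ X ∈ D d, ∀ Y ∈ D d',
    (fun i => dsumM (X i) (Y i)) ∈ D (d + d')
  isom : ∀ (d d' : ℕ) (V : Matrix (Fin d') (Fin d) ℂ), Vᴴ * V = 1 →
    ∀ X ∈ D d', (fun i => Vᴴ * X i * V) ∈ D d
  selfAdj : ∀ (d : ℕ), ∀ X ∈ D d, (fun i => (X i)ᴴ) ∈ D d

/-- A graded family of functions is a free function on the domain `D`:
it preserves unitary conjugation and direct sums. -/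
structure IsFreeFn (k : ℕ) (D : ∀ d : ℕ, Set (Fin k → Mat d))
    (F : ∀ d : ℕ, (Fin k → Mat d) → Mat d) : Prop where
  unitary : ∀ (d : ℕ) (U : Mat d), U ∈ Matrix.unitaryGroup (Fin d) ℂ →
    ∀ X ∈ D d, F d (fun i => Uᴴ * X i * U) = Uᴴ * F d X * U
  dsum : ∀ (d d' : ℕ), ∀ X ∈ D d, ∀ Y ∈ D d',
    F (d + d') (fun i => dsumM (X i) (Y i)) = dsumM (F d X) (F d' Y)

/-- Operator concavity of a free function on `D`. -/
def IsOpConcave (k : ℕ) (D : ∀ d : ℕ, Set (Fin k → Mat d))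
    (F : ∀ d : ℕ, (Fin k → Mat d) → Mat d) : Prop :=
  ∀ (d : ℕ), ∀ X ∈ D d, ∀ Y ∈ D d, ∀ t : ℝ, 0 ≤ t → t ≤ 1 →
    Loewner (((1 - t : ℝ) : ℂ) • F d X + (t : ℂ) • F d Y)
      (F d (fun i => ((1 - t : ℝ) : ℂ) • X i + (t : ℂ) • Y i))

/-!
Write `1 - WᴴW = SᴴS`. Then `V = [S; W]` is an isometry with `Vᴴ (0 ⊕ X) V = WᴴXW` and
`Vᴴ (F(0) ⊕ F(X)) V = Sᴴ F(0) S + Wᴴ F(X) W ≥ Wᴴ F(X) W`, since `F(0) ≥ 0` in every dimension by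
freeness. So it suffices to prove the Jensen inequality for isometries. Completing `V` to a unitary
reduces it to compressions `Z ↦ Z₁₁` onto the first summand, and there midpoint concavity applied to
`Z` and `σZσ`, `σ = 1 ⊕ -1`, gives `F(Z₁₁) ≥ F(Z)₁₁` because `(Z + σZσ)/2 = Z₁₁ ⊕ Z₂₂` and `F`
preserves unitary conjugation and direct sums.
-/

theorem exists_mem_unitaryGroup_submatrix_eq {𝕜 ι κ : Type*} [RCLike 𝕜] [Fintype ι]
    [DecidableEq ι] [Fintype κ] [DecidableEq κ] {e : κ → ι} (he : Function.Injective e)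
    {V : Matrix ι κ 𝕜} (hV : Vᴴ * V = 1) : ∃ U ∈ unitaryGroup ι 𝕜, U.submatrix id e = V := by
  let col : κ → EuclideanSpace 𝕜 ι := fun j => WithLp.toLp 2 (Vᵀ j)
  have hcol : Orthonormal 𝕜 col := by
    rw [orthonormal_iff_ite]
    intro a c
    rw [← one_apply, ← hV, EuclideanSpace.inner_eq_star_dotProduct]
    simp [col, mul_apply, dotProduct, mul_comm]
  have hv : Orthonormal 𝕜 ((Set.range e).domRestrict (Function.extend e col 0)) := by
    convert hcol.comp _ (Equiv.ofInjective e he).symm.injective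
    ext ⟨_, j, rfl⟩ : 1
    simp [Set.domRestrict_apply, he.extend_apply]
  obtain ⟨b, hb⟩ := hv.exists_orthonormalBasis_extension_of_card_eq (by simp)
  refine ⟨(EuclideanSpace.basisFun ι 𝕜).toBasis.toMatrix b,
    OrthonormalBasis.toMatrix_orthonormalBasis_mem_unitary _ _, ?_⟩
  ext i j
  simp [Module.Basis.toMatrix_apply, hb (e j) ⟨j, rfl⟩, he.extend_apply, col]

theorem Matrix.PosSemidef.exists_eq_conjTranspose_mul_self {𝕜 n : Type*} [RCLike 𝕜]
    [Fintype n] [DecidableEq n] {P : Matrix n n 𝕜} (hP : P.PosSemidef) :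
    ∃ B : Matrix n n 𝕜, P = Bᴴ * B := by
  open scoped MatrixOrder in
  exact CStarAlgebra.nonneg_iff_eq_star_mul_self.mp hP.nonneg

def colStack {a b c : ℕ} (A : Matrix (Fin a) (Fin c) ℂ) (B : Matrix (Fin b) (Fin c) ℂ) :
    Matrix (Fin (a + b)) (Fin c) ℂ :=
  (fromRows A B).submatrix finSumFinEquiv.symm id

abbrev inclLeft (a b : ℕ) : Matrix (Fin (a + b)) (Fin a) ℂ := colStack 1 0

abbrev inclRight (a b : ℕ) : Matrix (Fin (a + b)) (Fin b) ℂ := colStack 0 1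

section Blocks

variable {a b c : ℕ}

theorem conjTranspose_colStack_mul_reindex_mul_colStack (A : Matrix (Fin a) (Fin c) ℂ)
    (B : Matrix (Fin b) (Fin c) ℂ) (N : Matrix (Fin a ⊕ Fin b) (Fin a ⊕ Fin b) ℂ) :
    (colStack A B)ᴴ * reindex finSumFinEquiv finSumFinEquiv N * colStack A B =
      fromCols Aᴴ Bᴴ * N * fromRows A B := by
  rw [colStack, conjTranspose_submatrix, reindex_apply, submatrix_mul_equiv,
    submatrix_mul_equiv, submatrix_id_id, conjTranspose_fromRows_eq_fromCols_conjTranspose]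

theorem conjTranspose_colStack_mul_dsumM_mul_colStack (A : Matrix (Fin a) (Fin c) ℂ)
    (B : Matrix (Fin b) (Fin c) ℂ) (P : Mat a) (Q : Mat b) :
    (colStack A B)ᴴ * dsumM P Q * colStack A B = Aᴴ * P * A + Bᴴ * Q * B := by
  rw [dsumM, conjTranspose_colStack_mul_reindex_mul_colStack, fromCols_mul_fromBlocks,
    fromCols_mul_fromRows]
  simp

theorem dsumM_one : dsumM (1 : Mat a) (1 : Mat b) = 1 := by
  simp [dsumM, fromBlocks_one]

theorem dsumM_zero : dsumM (0 : Mat a) (0 : Mat b) = 0 := by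
  simp [dsumM]

theorem conjTranspose_dsumM (P : Mat a) (Q : Mat b) : (dsumM P Q)ᴴ = dsumM Pᴴ Qᴴ := by
  simp [dsumM, fromBlocks_conjTranspose]

theorem dsumM_mul_dsumM (P P' : Mat a) (Q Q' : Mat b) :
    dsumM P Q * dsumM P' Q' = dsumM (P * P') (Q * Q') := by
  simp [dsumM, fromBlocks_multiply]

theorem conjTranspose_colStack_mul_colStack (A : Matrix (Fin a) (Fin c) ℂ)
    (B : Matrix (Fin b) (Fin c) ℂ) : (colStack A B)ᴴ * colStack A B = Aᴴ * A + Bᴴ * B := by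
  simpa [dsumM_one] using conjTranspose_colStack_mul_dsumM_mul_colStack A B 1 1

theorem mul_inclLeft (M : Matrix (Fin c) (Fin (a + b)) ℂ) :
    M * inclLeft a b = M.submatrix id (Fin.castAdd b) := by
  ext i j
  simp [colStack, mul_apply, ← finSumFinEquiv.sum_comp, Fintype.sum_sum_type, one_apply]

theorem Matrix.PosSemidef.dsumM {P : Mat a} {Q : Mat b} (hP : P.PosSemidef)
    (hQ : Q.PosSemidef) : (dsumM P Q).PosSemidef := by
  obtain ⟨B, rfl⟩ := hP.exists_eq_conjTranspose_mul_self
  obtain ⟨C, rfl⟩ := hQ.exists_eq_conjTranspose_mul_self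
  rw [← dsumM_mul_dsumM, ← conjTranspose_dsumM]
  exact posSemidef_conjTranspose_mul_self _

theorem inv_two_smul_add_conj_dsumM_one_neg_one (Z : Mat (a + b)) :
    (2⁻¹ : ℂ) • (Z + dsumM 1 (-1) * Z * dsumM 1 (-1)) =
      dsumM ((inclLeft a b)ᴴ * Z * inclLeft a b) ((inclRight a b)ᴴ * Z * inclRight a b) := by
  obtain ⟨N, rfl⟩ := (reindex finSumFinEquiv finSumFinEquiv).surjective Z
  obtain ⟨P, Q, R, S, rfl⟩ : ∃ P Q R S, N = fromBlocks P Q R S :=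
    ⟨_, _, _, _, (fromBlocks_toBlocks N).symm⟩
  rw [conjTranspose_colStack_mul_reindex_mul_colStack,
    conjTranspose_colStack_mul_reindex_mul_colStack, dsumM, dsumM]
  simp only [← coe_reindexAlgEquiv ℂ ℂ, ← map_mul, ← map_add, ← map_smul]
  congr 1
  simp only [fromBlocks_multiply, fromBlocks_add, fromBlocks_smul, fromCols_mul_fromBlocks,
    fromCols_mul_fromRows]
  congr 1 <;> simp <;> module

end Blocks

theorem Loewner.conj {m n : ℕ} {M N : Mat m} (h : Loewner M N) (C : Matrix (Fin m) (Fin n) ℂ) :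
    Loewner (Cᴴ * M * C) (Cᴴ * N * C) := by
  simpa only [Loewner, Matrix.mul_sub, Matrix.sub_mul] using h.conjTranspose_mul_mul_same C

theorem Loewner.of_add_left {n : ℕ} {P M N : Mat n} (hP : P.PosSemidef) (h : Loewner (P + M) N) :
    Loewner M N := by
  have h : (N - (P + M) + P).PosSemidef := h.add hP
  rwa [show N - (P + M) + P = N - M by abel] at h

section FreeFunction

variable {k : ℕ} {D : ∀ d : ℕ, Set (Fin k → Mat d)} {F : ∀ d : ℕ, (Fin k → Mat d) → Mat d}

theorem IsSAMatrixConvex.zero_mem (hD : IsSAMatrixConvex k D)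
    (h0 : (fun _ : Fin k => (0 : Mat 1)) ∈ D 1) (d : ℕ) : (fun _ : Fin k => (0 : Mat d)) ∈ D d := by
  induction d with
  | zero =>
    simpa using hD.isom 0 1 0 (Subsingleton.elim _ _) _ h0
  | succ d ih =>
    simpa [dsumM_zero] using hD.dsum d 1 _ ih _ h0

theorem IsFreeFn.posSemidef_apply_zero (hD : IsSAMatrixConvex k D) (hF : IsFreeFn k D F)
    (h0 : (fun _ : Fin k => (0 : Mat 1)) ∈ D 1) (hF0 : (F 1 (fun _ => 0)).PosSemidef) (d : ℕ) :
    (F d (fun _ => 0)).PosSemidef := by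
  induction d with
  | zero =>
    rw [Subsingleton.elim (F 0 _) 0]
    exact .zero
  | succ d ih =>
    have h := hF.dsum d 1 _ (hD.zero_mem h0 d) _ h0
    simp only [dsumM_zero] at h
    rw [h]
    exact ih.dsumM hF0

theorem IsOpConcave.midpoint (hconc : IsOpConcave k D F) {d : ℕ} {X Y : Fin k → Mat d}
    (hX : X ∈ D d) (hY : Y ∈ D d) :
    Loewner ((2⁻¹ : ℂ) • (F d X + F d Y)) (F d (fun i => (2⁻¹ : ℂ) • (X i + Y i))) := by
  have h := hconc d X hX Y hY 2⁻¹ (by norm_num) (by norm_num)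
  have h₁ : ((1 - 2⁻¹ : ℝ) : ℂ) = 2⁻¹ := by norm_num
  have h₂ : ((2⁻¹ : ℝ) : ℂ) = 2⁻¹ := by push_cast; rfl
  simpa only [h₁, h₂, smul_add] using h

theorem loewner_conj_inclLeft (hD : IsSAMatrixConvex k D) (hF : IsFreeFn k D F)
    (hconc : IsOpConcave k D F) {a b : ℕ} {Z : Fin k → Mat (a + b)} (hZ : Z ∈ D (a + b)) :
    Loewner ((inclLeft a b)ᴴ * F (a + b) Z * inclLeft a b)
      (F a (fun i => (inclLeft a b)ᴴ * Z i * inclLeft a b)) := by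
  have hσ : (dsumM (1 : Mat a) (-1 : Mat b))ᴴ = dsumM 1 (-1) := by simp [conjTranspose_dsumM]
  have hσ_unitary : dsumM (1 : Mat a) (-1 : Mat b) ∈ unitaryGroup (Fin (a + b)) ℂ := by
    simp [mem_unitaryGroup_iff', star_eq_conjTranspose, hσ, dsumM_mul_dsumM, dsumM_one]
  have hZσ := hD.unitary _ _ hσ_unitary Z hZ
  have hZ₁ := hD.isom a _ (inclLeft a b) (by simp [conjTranspose_colStack_mul_colStack]) Z hZ
  have hZ₂ := hD.isom b _ (inclRight a b) (by simp [conjTranspose_colStack_mul_colStack]) Z hZ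
  have h := (hconc.midpoint hZ hZσ).conj (inclLeft a b)
  rw [hF.unitary _ _ hσ_unitary Z hZ] at h
  simp only [hσ, inv_two_smul_add_conj_dsumM_one_neg_one] at h
  rw [hF.dsum a b _ hZ₁ _ hZ₂] at h
  simpa [conjTranspose_colStack_mul_dsumM_mul_colStack] using h

theorem loewner_conj_isometry (hD : IsSAMatrixConvex k D) (hF : IsFreeFn k D F)
    (hconc : IsOpConcave k D F) {d m : ℕ} {V : Matrix (Fin (d + m)) (Fin d) ℂ}
    (hV : Vᴴ * V = 1) {Z : Fin k → Mat (d + m)} (hZ : Z ∈ D (d + m)) :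
    Loewner (Vᴴ * F (d + m) Z * V) (F d (fun i => Vᴴ * Z i * V)) := by
  obtain ⟨U, hU, hUV⟩ := exists_mem_unitaryGroup_submatrix_eq (Fin.castAdd_injective d m) hV
  have hUV' : U * inclLeft d m = V := by rw [mul_inclLeft, hUV]
  have h := loewner_conj_inclLeft hD hF hconc (hD.unitary _ U hU Z hZ)
  rw [hF.unitary _ U hU Z hZ] at h
  simpa only [← hUV', conjTranspose_mul, Matrix.mul_assoc] using h

end FreeFunction

/-- if an operator concave free function `F` on a self-adjoint
matrix convex domain satisfies `0 ∈ D(ℂ)` and `F(0) ≥ 0`, then the Jensen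
inequality `F(Wᴴ X W) ≥ Wᴴ F(X) W` holds for all contractions `W : E → K`
(i.e. `1 - Wᴴ W ≥ 0`) and all `X ∈ D(K)` with `Wᴴ X W ∈ D(E)`. -/
theorem stmt13 (k : ℕ) (D : ∀ d : ℕ, Set (Fin k → Mat d))
    (F : ∀ d : ℕ, (Fin k → Mat d) → Mat d)
    (hD : IsSAMatrixConvex k D) (hF : IsFreeFn k D F)
    (hconc : IsOpConcave k D F)
    (h0 : (fun _ : Fin k => (0 : Mat 1)) ∈ D 1)
    (hF0 : (F 1 (fun _ => 0)).PosSemidef) :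
    ∀ (d d' : ℕ) (W : Matrix (Fin d') (Fin d) ℂ), (1 - Wᴴ * W).PosSemidef →
      ∀ X ∈ D d', (fun i => Wᴴ * X i * W) ∈ D d →
        Loewner (Wᴴ * F d' X * W) (F d (fun i => Wᴴ * X i * W)) := by
  intro d d' W hW X hX _
  obtain ⟨S, hS⟩ := hW.exists_eq_conjTranspose_mul_self
  have hV : (colStack S W)ᴴ * colStack S W = 1 := by
    rw [conjTranspose_colStack_mul_colStack, ← hS, sub_add_cancel]
  have hZ := hD.dsum d d' _ (hD.zero_mem h0 d) X hX
  have h := loewner_conj_isometry hD hF hconc hV hZ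
  rw [hF.dsum d d' _ (hD.zero_mem h0 d) X hX] at h
  simp only [conjTranspose_colStack_mul_dsumM_mul_colStack, Matrix.mul_zero, Matrix.zero_mul,
    zero_add] at h
  exact h.of_add_left
    ((hF.posSemidef_apply_zero hD h0 hF0 d).conjTranspose_mul_mul_same S)
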